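/- The set of natural numbers N whose Zeckendorf expansion ends in the digits d_1 d_0 = 10 is exactly {B(A(n)) : n ≥ 1} = {2⌊nφ⌋ + n − 1 : n ≥ 1}, where A(n) = ⌊nφ⌋ and B(n) = ⌊nφ²⌋. -/

import Mathlib

noncomputable def phi : ℝ := (1 + Real.sqrt 5) / 2

/-- Lower Wythoff sequence. -/
noncomputable def A (n : ℕ) : ℕ := (⌊(n : ℝ) * phi⌋).toNat

/-- Upper Wythoff sequence. -/
noncomputable def B (n : ℕ) : ℕ := (⌊(n : ℝ) * phi ^ 2⌋).toNat

/-- `d` is the digit sequence of the Zeckendorf expansion of `N`: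
digits are 0/1, no two consecutive 1's, finitely many nonzero digits,
and `N = Σ dᵢ · F_{i+2}`. -/
def IsZeck (N : ℕ) (d : ℕ → ℕ) : Prop :=
  (∀ i, d i ≤ 1) ∧ (∀ i, ¬(d i = 1 ∧ d (i + 1) = 1)) ∧
  (Function.support d).Finite ∧ N = ∑ᶠ i, d i * Nat.fib (i + 2)

/-!
Write `N = Σ_{i ∈ l} F_{i+2}` over the ascending list `l` of its Zeckendorf digit positions and let
`m` be the lowest one. Since `F_{k+1} - φ F_k = ψ^k`, the error `Σ F_{i+3} - Nφ = Σ ψ^{i+2}` has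
the sign of its leading term `ψ^{m+2}` and absolute value below `1`, so `⌊Nφ⌋` is the shifted sum
`Σ F_{i+3}` when `m` is odd and one less when `m` is even; in the even case the `- 1` turns the
leading `F_{m+3}` into `F_2 + F_4 + ⋯ + F_{m+2}`. Hence `A(n)` always has an even lowest position,
and `B(n) = A(A(n)) + 1` is the shift of `A(n)` by one, so its lowest position is odd and equals
`1` exactly when that of `n` is even. Rayleigh's theorem writes every `N > 0` as some `A(j)` or
`B(j)`, and the parities then force `N = B(A(n))` when `N` ends in `10`; finally
`B(A(n)) = A(n) + A(A(n)) = 2A(n) + n - 1`.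
-/

open List
open Nat (fib zeckendorf)

-- Positions of the nonzero digits, in increasing order; position `i` stands for `F_{i+2}`.
def Sparse (l : List ℕ) : Prop := l.Pairwise (· + 2 ≤ ·)

def fibSum (l : List ℕ) : ℕ := (l.map fun i => fib (i + 2)).sum

@[simp] lemma fibSum_nil : fibSum [] = 0 := rfl

@[simp] lemma fibSum_cons (m : ℕ) (t : List ℕ) : fibSum (m :: t) = fib (m + 2) + fibSum t := by
  simp [fibSum]

@[simp] lemma fibSum_append (l₁ l₂ : List ℕ) : fibSum (l₁ ++ l₂) = fibSum l₁ + fibSum l₂ := by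
  simp [fibSum]

lemma sparse_cons {m : ℕ} {t : List ℕ} : Sparse (m :: t) ↔ (∀ i ∈ t, m + 2 ≤ i) ∧ Sparse t :=
  pairwise_cons

lemma Sparse.map_add {l : List ℕ} (h : Sparse l) (c : ℕ) : Sparse (l.map (· + c)) :=
  h.map _ fun _ _ hab => by omega

lemma isZeckendorfRep_iff {L : List ℕ} :
    IsZeckendorfRep L ↔ L.Pairwise (fun a b => b + 2 ≤ a) ∧ ∀ a ∈ L, 2 ≤ a := by
  have : Trans (fun a b : ℕ => b + 2 ≤ a) (fun a b => b + 2 ≤ a) (fun a b => b + 2 ≤ a) :=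
    ⟨fun h₁ h₂ => by omega⟩
  simp [IsZeckendorfRep, isChain_iff_pairwise, pairwise_append]

lemma isZeckendorfRep_iff_sparse {l : List ℕ} :
    IsZeckendorfRep (l.map (· + 2)).reverse ↔ Sparse l := by
  simp [isZeckendorfRep_iff, pairwise_reverse, pairwise_map, Sparse]

lemma fibSum_eq_sum_map_fib (l : List ℕ) : fibSum l = ((l.map (· + 2)).reverse.map fib).sum := by
  simp [fibSum, map_reverse, sum_reverse, Function.comp_def]

-- Mathlib's `Nat.zeckendorf` lists Fibonacci indices in decreasing order.
def zeckDigits (n : ℕ) : List ℕ := (zeckendorf n).reverse.map (· - 2)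

lemma map_add_two_zeckDigits (n : ℕ) : ((zeckDigits n).map (· + 2)).reverse = zeckendorf n := by
  have h := (isZeckendorfRep_iff.1 (Nat.isZeckendorfRep_zeckendorf n)).2
  simp only [zeckDigits, map_reverse, map_map, reverse_reverse]
  exact (map_congr_left fun a ha => by have := h a ha; simp; omega).trans (map_id' _)

lemma sparse_zeckDigits (n : ℕ) : Sparse (zeckDigits n) := by
  rw [← isZeckendorfRep_iff_sparse, map_add_two_zeckDigits]
  exact Nat.isZeckendorfRep_zeckendorf n

@[simp] lemma fibSum_zeckDigits (n : ℕ) : fibSum (zeckDigits n) = n := by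
  rw [fibSum_eq_sum_map_fib, map_add_two_zeckDigits, Nat.sum_zeckendorf_fib]

lemma Sparse.zeckDigits_fibSum {l : List ℕ} (h : Sparse l) : zeckDigits (fibSum l) = l := by
  rw [zeckDigits, fibSum_eq_sum_map_fib, Nat.zeckendorf_sum_fib (isZeckendorfRep_iff_sparse.2 h)]
  simp [Function.comp_def]

lemma Sparse.nodup {l : List ℕ} (h : Sparse l) : l.Nodup := h.imp (by omega)

lemma Sparse.succ_notMem {l : List ℕ} (h : Sparse l) {i : ℕ} (hi : i ∈ l) : i + 1 ∉ l := by
  have : Std.Symm fun a b : ℕ => a + 1 ≠ b ∧ b + 1 ≠ a := ⟨fun _ _ hab => hab.symm⟩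
  intro hi'
  have := (h.imp (S := fun a b => a + 1 ≠ b ∧ b + 1 ≠ a) (by omega)).forall hi hi' (by omega)
  omega

lemma finsum_ite_mem_mul_fib {l : List ℕ} (hl : l.Nodup) :
    ∑ᶠ i, (if i ∈ l then 1 else 0) * fib (i + 2) = fibSum l := by
  rw [finsum_eq_sum_of_support_subset (s := l.toFinset) _ fun i hi => by
    by_contra h; simp_all, fibSum, ← sum_toFinset _ hl]
  exact Finset.sum_congr rfl fun i hi => by simp [List.mem_toFinset.1 hi]

lemma isZeck_fibSum {l : List ℕ} (h : Sparse l) :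
    IsZeck (fibSum l) fun i => if i ∈ l then 1 else 0 := by
  refine ⟨fun i => by dsimp only; split_ifs <;> simp, fun i => ?_, ?_,
    (finsum_ite_mem_mul_fib h.nodup).symm⟩
  · by_cases hi : i ∈ l <;> simp [hi, h.succ_notMem]
  · exact l.finite_toSet.subset fun i hi => by by_contra h; simp_all

lemma IsZeck.exists_sparse {N : ℕ} {d : ℕ → ℕ} (h : IsZeck N d) :
    ∃ l, Sparse l ∧ fibSum l = N ∧ d = fun i => if i ∈ l then 1 else 0 := by
  obtain ⟨hle, hcons, hfin, hN⟩ := h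
  set l := hfin.toFinset.sort (· ≤ ·)
  have hmem : ∀ i, i ∈ l ↔ d i = 1 := fun i => by
    have := hle i
    simp only [l, Finset.mem_sort, Set.Finite.mem_toFinset, Function.mem_support]
    omega
  have hd : d = fun i => if i ∈ l then 1 else 0 := funext fun i => by
    have := hle i
    split_ifs with hi <;> rw [hmem] at hi <;> omega
  refine ⟨l, (Finset.sortedLT_sort _).pairwise.imp_of_mem fun {a b} ha hb hab => ?_, ?_, hd⟩
  · rw [hmem] at ha hb
    by_contra hgap
    obtain rfl : b = a + 1 := by omega
    exact hcons a ⟨ha, hb⟩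
  · rw [hN, hd, finsum_ite_mem_mul_fib (Finset.sort_nodup _ _)]

lemma isZeck_iff {N : ℕ} {d : ℕ → ℕ} :
    IsZeck N d ↔ d = fun i => if i ∈ zeckDigits N then 1 else 0 := by
  refine ⟨fun h => ?_, ?_⟩
  · obtain ⟨l, hl, rfl, rfl⟩ := h.exists_sparse
    rw [hl.zeckDigits_fibSum]
  · rintro rfl
    simpa using isZeck_fibSum (sparse_zeckDigits N)

lemma Sparse.head?_eq_some_one_iff {l : List ℕ} (h : Sparse l) :
    l.head? = some 1 ↔ 0 ∉ l ∧ 1 ∈ l := by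
  rcases l with _ | ⟨m, t⟩
  · simp
  have := (sparse_cons.1 h).1
  constructor
  · rintro ⟨⟩
    exact ⟨by simpa using fun h0 => by have := this 0 h0; omega, mem_cons_self⟩
  · rintro ⟨h0, h1⟩
    rcases mem_cons.1 h1 with rfl | h1
    · rfl
    · exact absurd (this 1 h1) (by omega)

open Real goldenRatio

lemma abs_goldenConj_add_sq : |ψ| + |ψ| ^ 2 = 1 := by
  rw [sq_abs, goldenConj_sq, abs_of_neg goldenConj_neg]
  ring

lemma abs_goldenConj_lt_one : |ψ| < 1 :=
  abs_lt.2 ⟨neg_one_lt_goldenConj, goldenConj_neg.trans one_pos⟩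

lemma fibSum_map_succ_sub_mul_goldenRatio (l : List ℕ) :
    (fibSum (l.map (· + 1)) : ℝ) - fibSum l * φ = (l.map fun i => ψ ^ (i + 2)).sum := by
  induction l with
  | nil => simp
  | cons m t ih =>
    have := fib_succ_sub_goldenRatio_mul_fib (m + 2)
    rw [Nat.add_right_comm] at this
    simp only [map_cons, fibSum_cons, sum_cons, Nat.cast_add] at ih ⊢
    linarith

lemma abs_sum_goldenConj_pow_le {l : List ℕ} (h : Sparse l) {b : ℕ} (hb : ∀ i ∈ l, b ≤ i) :
    |(l.map fun i => ψ ^ (i + 2)).sum| ≤ |ψ| ^ (b + 1) := by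
  induction l generalizing b with
  | nil => simp
  | cons m t ih =>
    obtain ⟨hmt, ht⟩ := sparse_cons.1 h
    calc |(ψ ^ (m + 2) + (t.map fun i => ψ ^ (i + 2)).sum)|
        ≤ |ψ| ^ (m + 2) + |ψ| ^ (m + 3) := by
          grw [abs_add_le, abs_pow, ih ht hmt]
      _ = |ψ| ^ (m + 1) := by linear_combination |ψ| ^ (m + 1) * abs_goldenConj_add_sq
      _ ≤ |ψ| ^ (b + 1) :=
          pow_le_pow_of_le_one (abs_nonneg _) abs_goldenConj_lt_one.le (by simp_all)

lemma floor_fibSum_mul_goldenRatio {m : ℕ} {t : List ℕ} (h : Sparse (m :: t)) :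
    ⌊(fibSum (m :: t) : ℝ) * φ⌋ = fibSum ((m :: t).map (· + 1)) - if Even m then 1 else 0 := by
  have hx : (fibSum ((m :: t).map (· + 1)) : ℝ) - fibSum (m :: t) * φ =
      ψ ^ (m + 2) + (t.map fun i => ψ ^ (i + 2)).sum :=
    fibSum_map_succ_sub_mul_goldenRatio (m :: t)
  have htail := abs_le.1 (abs_sum_goldenConj_pow_le (sparse_cons.1 h).2 (sparse_cons.1 h).1)
  have hlt : |ψ| ^ (m + 2 + 1) < |ψ| ^ (m + 2) :=
    pow_lt_pow_right_of_lt_one₀ (abs_pos.2 goldenConj_ne_zero) abs_goldenConj_lt_one (by omega)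
  have hsum : |ψ| ^ (m + 2) + |ψ| ^ (m + 2 + 1) < 1 := by
    calc _ = |ψ| ^ (m + 1) := by linear_combination |ψ| ^ (m + 1) * abs_goldenConj_add_sq
      _ < 1 := pow_lt_one₀ (abs_nonneg _) abs_goldenConj_lt_one (by omega)
  rw [Int.floor_eq_iff]
  split_ifs with hm
  · have := (hm.add even_two).pow_abs ψ
    push_cast
    constructor <;> linarith
  · have := abs_of_neg (((Nat.not_even_iff_odd.1 hm).add_even even_two).pow_neg goldenConj_neg)
    rw [abs_pow] at this
    push_cast
    constructor <;> linarith

lemma phi_eq_goldenRatio : phi = φ := rfl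

lemma natCast_A (n : ℕ) : (A n : ℤ) = ⌊(n : ℝ) * φ⌋ :=
  Int.toNat_of_nonneg (Int.floor_nonneg.2 (by rw [phi_eq_goldenRatio]; positivity))

lemma B_eq_add_A (n : ℕ) : B n = n + A n := by
  have : (n : ℝ) * φ ^ 2 = n * φ + n := by rw [goldenRatio_sq]; ring
  rw [B, phi_eq_goldenRatio, this, Int.floor_add_natCast, Int.toNat_add_nat
    (Int.floor_nonneg.2 (by positivity)), A, phi_eq_goldenRatio, add_comm]

lemma A_A_add_one {n : ℕ} (hn : n ≠ 0) : A (A n) + 1 = B n := by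
  rw [B_eq_add_A]
  zify
  rw [natCast_A (A n), natCast_A n, ← eq_sub_iff_add_eq, Int.floor_eq_iff]
  set a := ⌊(n : ℝ) * φ⌋
  have ha : ((A n : ℕ) : ℝ) = a := by exact_mod_cast natCast_A n
  have hlt : (a : ℝ) < n * φ := (Int.floor_le _).lt_of_ne fun h =>
    (goldenRatio_irrational.natCast_mul hn).ne_int a h.symm
  have hgt : (n : ℝ) * φ < a + 1 := Int.lt_floor_add_one _
  have hφ : φ - 1 < 1 := by linarith [goldenRatio_lt_two]
  have hφ' : 0 < φ - 1 := by linarith [one_lt_goldenRatio]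
  -- `0 < (n φ - a) (φ - 1) < 1`, both factors lying in `(0, 1)`
  have hid : (a : ℝ) * φ = a + n - (n * φ - a) * (φ - 1) := by
    linear_combination (n : ℝ) * goldenRatio_sq
  rw [ha, hid]
  push_cast
  constructor <;> nlinarith

lemma B_A_add_one {n : ℕ} (hn : n ≠ 0) : B (A n) + 1 = 2 * A n + n := by
  have := A_A_add_one hn
  rw [B_eq_add_A] at this ⊢
  omega

lemma exists_eq_A_or_eq_B {N : ℕ} (hN : N ≠ 0) : ∃ j, 0 < j ∧ (N = A j ∨ N = B j) := by
  have hconj : Real.HolderConjugate φ (φ ^ 2) := by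
    refine Real.holderConjugate_iff.2 ⟨one_lt_goldenRatio, ?_⟩
    rw [← inv_pow, inv_goldenRatio, neg_sq, goldenConj_sq]
    ring
  have hN' : (N : ℤ) ∈ {n : ℤ | 0 < n} := by simpa [Nat.pos_iff_ne_zero] using hN
  rw [← goldenRatio_irrational.beattySeq_symmDiff_beattySeq_pos hconj] at hN'
  obtain ⟨⟨k, hk, hkN⟩, -⟩ | ⟨⟨k, hk, hkN⟩, -⟩ := hN'
  all_goals
    lift k to ℕ using hk.le
    refine ⟨k, by exact_mod_cast hk, ?_⟩
    simp only [beattySeq, Int.cast_natCast] at hkN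
  · left; zify; rw [natCast_A, hkN]
  · right; zify; rw [B, phi_eq_goldenRatio, Int.toNat_of_nonneg (by positivity), hkN]

def evens (k : ℕ) : List ℕ := (range (k + 1)).map (2 * ·)

lemma sparse_evens (k : ℕ) : Sparse (evens k) :=
  pairwise_lt_range.map _ fun _ _ h => by omega

lemma fibSum_evens_add_one (k : ℕ) : fibSum (evens k) + 1 = fib (2 * k + 3) := by
  induction k with
  | zero => rfl
  | succ k ih =>
    rw [evens, range_succ, map_append, ← evens, fibSum_append,
      show 2 * (k + 1) + 3 = 2 * k + 3 + 2 by ring, Nat.fib_add_two]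
    simp only [map_cons, map_nil, fibSum_cons, fibSum_nil]
    ring_nf at ih ⊢
    omega

lemma A_fibSum_add_ite {m : ℕ} {t : List ℕ} (h : Sparse (m :: t)) :
    A (fibSum (m :: t)) + (if Even m then 1 else 0) = fibSum ((m :: t).map (· + 1)) := by
  have := floor_fibSum_mul_goldenRatio h
  rw [← natCast_A] at this
  split_ifs at this ⊢ <;> omega

lemma zeckDigits_A_of_not_even {m : ℕ} {t : List ℕ} (h : Sparse (m :: t)) (hm : ¬Even m) :
    zeckDigits (A (fibSum (m :: t))) = (m :: t).map (· + 1) := by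
  have := A_fibSum_add_ite h
  rw [if_neg hm, add_zero] at this
  rw [this, (h.map_add 1).zeckDigits_fibSum]

lemma zeckDigits_A_of_even {k : ℕ} {t : List ℕ} (h : Sparse (2 * k :: t)) :
    zeckDigits (A (fibSum (2 * k :: t))) = evens k ++ t.map (· + 1) := by
  obtain ⟨hkt, ht⟩ := sparse_cons.1 h
  have hs : Sparse (evens k ++ t.map (· + 1)) := by
    refine pairwise_append.2 ⟨sparse_evens k, ht.map_add 1, fun a ha b hb => ?_⟩
    simp only [evens, mem_map, mem_range] at ha hb
    obtain ⟨i, hi, rfl⟩ := ha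
    obtain ⟨j, hj, rfl⟩ := hb
    have := hkt j hj
    omega
  have hA : A (fibSum (2 * k :: t)) + 1 = fib (2 * k + 3) + fibSum (t.map (· + 1)) := by
    simpa [even_two_mul] using A_fibSum_add_ite h
  have := fibSum_evens_add_one k
  rw [← hs.zeckDigits_fibSum, fibSum_append]
  congr 1
  omega

lemma head?_zeckDigits_A {n m : ℕ} (h : (zeckDigits n).head? = some m) :
    (zeckDigits (A n)).head? = some (if Even m then 0 else m + 1) := by
  obtain ⟨t, ht⟩ := head?_eq_some_iff.1 h
  have hs : Sparse (m :: t) := ht ▸ sparse_zeckDigits n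
  rw [← fibSum_zeckDigits n, ht]
  split_ifs with hm
  · obtain ⟨k, rfl⟩ := hm
    rw [← two_mul] at hs ⊢
    rw [zeckDigits_A_of_even hs]
    simp [evens, range_succ_eq_map]
  · rw [zeckDigits_A_of_not_even hs hm]
    rfl

lemma zeckDigits_eq_nil {n : ℕ} : zeckDigits n = [] ↔ n = 0 := by
  refine ⟨fun h => by rw [← fibSum_zeckDigits n, h, fibSum_nil], ?_⟩
  rintro rfl
  simp [zeckDigits]

lemma exists_head?_zeckDigits {n : ℕ} (hn : n ≠ 0) : ∃ m, (zeckDigits n).head? = some m :=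
  Option.ne_none_iff_exists'.1 (by rwa [ne_eq, head?_eq_none_iff, zeckDigits_eq_nil])

lemma even_of_head?_zeckDigits_A {n m : ℕ} (h : (zeckDigits (A n)).head? = some m) : Even m := by
  rcases eq_or_ne n 0 with rfl | hn
  · simp [A, zeckDigits] at h
  obtain ⟨m₀, hm₀⟩ := exists_head?_zeckDigits hn
  rw [head?_zeckDigits_A hm₀, Option.some_inj] at h
  subst h
  split_ifs with hm₀
  exacts [Even.zero, (Nat.not_even_iff_odd.1 hm₀).add_one]

lemma zeckDigits_B (n : ℕ) : zeckDigits (B n) = (zeckDigits (A n)).map (· + 1) := by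
  rcases eq_or_ne n 0 with rfl | hn
  · simp [A, B, zeckDigits]
  obtain ⟨m₀, hm₀⟩ := exists_head?_zeckDigits hn
  obtain ⟨t, ht⟩ := head?_eq_some_iff.1 (head?_zeckDigits_A hm₀)
  set m := if Even m₀ then 0 else m₀ + 1
  have hs : Sparse (m :: t) := ht ▸ sparse_zeckDigits (A n)
  have hm : Even m := even_of_head?_zeckDigits_A (by rw [ht]; rfl)
  have hB := A_fibSum_add_ite hs
  rw [if_pos hm, ← ht, fibSum_zeckDigits, A_A_add_one hn] at hB
  rw [hB, ht, (hs.map_add 1).zeckDigits_fibSum]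

lemma odd_of_head?_zeckDigits_B {n m : ℕ} (h : (zeckDigits (B n)).head? = some m) : Odd m := by
  rw [zeckDigits_B, head?_map, Option.map_eq_some_iff] at h
  obtain ⟨m', hm', rfl⟩ := h
  exact (even_of_head?_zeckDigits_A hm').add_one

lemma head?_zeckDigits_B_eq_some_one_iff {n m : ℕ} (h : (zeckDigits n).head? = some m) :
    (zeckDigits (B n)).head? = some 1 ↔ Even m := by
  rw [zeckDigits_B, head?_map, head?_zeckDigits_A h]
  split_ifs <;> simp_all

lemma head?_zeckDigits_B_A {n : ℕ} (hn : n ≠ 0) : (zeckDigits (B (A n))).head? = some 1 := by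
  obtain ⟨m, hm⟩ := exists_head?_zeckDigits hn
  have hAm := head?_zeckDigits_A hm
  exact (head?_zeckDigits_B_eq_some_one_iff hAm).2 (even_of_head?_zeckDigits_A hAm)

lemma exists_eq_B_A_of_head?_zeckDigits {N : ℕ} (h : (zeckDigits N).head? = some 1) :
    ∃ n, 0 < n ∧ N = B (A n) := by
  have hN : N ≠ 0 := by rintro rfl; simp [zeckDigits] at h
  obtain ⟨j, hj, rfl | rfl⟩ := exists_eq_A_or_eq_B hN
  · exact absurd (even_of_head?_zeckDigits_A h) (by decide)
  obtain ⟨m, hm⟩ := exists_head?_zeckDigits hj.ne'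
  obtain ⟨k, hk, rfl | rfl⟩ := exists_eq_A_or_eq_B hj.ne'
  · exact ⟨k, hk, rfl⟩
  · exact absurd ((head?_zeckDigits_B_eq_some_one_iff hm).1 h)
      (Nat.not_even_iff_odd.2 (odd_of_head?_zeckDigits_B hm))

/-- The numbers whose Zeckendorf expansion ends in digits d₁d₀ = 10 are exactly
the numbers B(A(n)) = 2⌊nphi⌋ + n − 1, n ≥ 1. -/
theorem zeck_ends_in_10 (N : ℕ) :
    (∃ d : ℕ → ℕ, IsZeck N d ∧ d 0 = 0 ∧ d 1 = 1) ↔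
      ∃ n : ℕ, 1 ≤ n ∧ N = B (A n) ∧ (N : ℤ) = 2 * (A n : ℤ) + n - 1 := by
  have hdigits :
      (∃ d : ℕ → ℕ, IsZeck N d ∧ d 0 = 0 ∧ d 1 = 1) ↔ (zeckDigits N).head? = some 1 := by
    simp [isZeck_iff, (sparse_zeckDigits N).head?_eq_some_one_iff]
  rw [hdigits]
  constructor
  · intro h
    obtain ⟨n, hn, rfl⟩ := exists_eq_B_A_of_head?_zeckDigits h
    have := B_A_add_one hn.ne'
    exact ⟨n, hn, rfl, by omega⟩
  · rintro ⟨n, hn, rfl, -⟩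
    exact head?_zeckDigits_B_A (Nat.one_le_iff_ne_zero.1 hn)
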